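/- If n ≥ 3 and m ≥ 1, then the packing chromatic number of FSSD_m(S'(K_n)) equals n + 2, where S'(K_n) is the splitting graph of the complete graph K_n. -/

import Mathlib

open SimpleGraph

/-- A `k`-packing coloring: colors in `{1,…,k}`, and distinct vertices with the same
color `i` are at distance greater than `i`. -/
def IsPackingColoring {V : Type*} (G : SimpleGraph V) (k : ℕ) (c : V → ℕ) : Prop :=
  (∀ v, 1 ≤ c v ∧ c v ≤ k) ∧
  ∀ u v : V, u ≠ v → c u = c v → (c u : ℕ∞) < G.edist u v

/-- The packing chromatic number: the least `k` admitting a `k`-packing coloring. -/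
noncomputable def packingChromaticNumber {V : Type*} (G : SimpleGraph V) : ℕ :=
  sInf {k | ∃ c : V → ℕ, IsPackingColoring G k c}

/-- The finite super subdivision `FSSD_m(G)`: each edge `uv` of `G` is replaced by
`m` new common neighbors of `u` and `v` (the original edge is deleted). -/
def FSSD {V : Type*} (G : SimpleGraph V) (m : ℕ) :
    SimpleGraph (V ⊕ (G.edgeSet × Fin m)) where
  Adj x y :=
    match x, y with
    | Sum.inl u, Sum.inr e => u ∈ (e.1 : Sym2 V)
    | Sum.inr e, Sum.inl u => u ∈ (e.1 : Sym2 V)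
    | _, _ => False
  symm := ⟨by rintro (u | e) (v | f) h <;> simp_all⟩
  loopless := ⟨by rintro (u | e) h <;> simp_all⟩

/-- The neighborhood corona `G ⋆ H`: one copy of `G` and one copy of `H` for each
vertex of `G`; each vertex of the `i`-th copy of `H` is joined to all neighbors of
the `i`-th vertex of `G`. -/
def ncorona {V₁ V₂ : Type*} (G : SimpleGraph V₁) (H : SimpleGraph V₂) :
    SimpleGraph (V₁ ⊕ (V₁ × V₂)) where
  Adj x y :=
    match x, y with
    | Sum.inl u, Sum.inl v => G.Adj u v
    | Sum.inl u, Sum.inr p => G.Adj u p.1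
    | Sum.inr p, Sum.inl u => G.Adj u p.1
    | Sum.inr p, Sum.inr q => p.1 = q.1 ∧ H.Adj p.2 q.2
  symm := ⟨by rintro (u | p) (v | q) h <;> simp_all [adj_comm]⟩
  loopless := ⟨by rintro (u | p) h <;> simp_all⟩

/-- The splitting graph `S'(G) = G ⋆ K₁`. -/
def splittingGraph {V : Type*} (G : SimpleGraph V) : SimpleGraph (V ⊕ (V × Fin 1)) :=
  ncorona G (⊥ : SimpleGraph (Fin 1))

/-! ### Auxiliary machinery -/

lemma one_lt_edist' {V : Type*} {G : SimpleGraph V} {u v : V} (hne : u ≠ v)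
    (hadj : ¬ G.Adj u v) : (1 : ℕ∞) < G.edist u v := by
  by_contra h
  push_neg at h
  have hne_top : G.edist u v ≠ ⊤ := fun ht => by simp [ht] at h
  obtain ⟨p, hp⟩ := exists_walk_of_edist_ne_top hne_top
  have hl2 : p.length ≤ 1 := by exact_mod_cast hp ▸ h
  match p, hl2 with
  | .nil, _ => exact hne rfl
  | .cons h .nil, _ => exact hadj h
  | .cons _ (.cons _ _), h => simp [SimpleGraph.Walk.length_cons] at h

lemma two_lt_edist' {V : Type*} {G : SimpleGraph V} {u v : V} (hne : u ≠ v)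
    (hadj : ¬ G.Adj u v) (hcom : ∀ w, ¬ (G.Adj u w ∧ G.Adj w v)) :
    (2 : ℕ∞) < G.edist u v := by
  by_contra h
  push_neg at h
  have hne_top : G.edist u v ≠ ⊤ := fun ht => by simp [ht] at h
  obtain ⟨p, hp⟩ := exists_walk_of_edist_ne_top hne_top
  have hl2 : p.length ≤ 2 := by exact_mod_cast hp ▸ h
  match p, hl2 with
  | .nil, _ => exact hne rfl
  | .cons h .nil, _ => exact hadj h
  | .cons h1 (.cons h2 .nil), _ => exact hcom _ ⟨h1, h2⟩
  | .cons _ (.cons _ (.cons _ _)), h => simp [SimpleGraph.Walk.length_cons] at h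

lemma edist_le_two_of' {V : Type*} {G : SimpleGraph V} {u w v : V}
    (h1 : G.Adj u w) (h2 : G.Adj w v) : G.edist u v ≤ 2 := by
  simpa using SimpleGraph.edist_le (Walk.cons h1 (Walk.cons h2 Walk.nil))

lemma edist_le_three_of' {V : Type*} {G : SimpleGraph V} {u w x v : V}
    (h1 : G.Adj u w) (h2 : G.Adj w x) (h3 : G.Adj x v) : G.edist u v ≤ 3 := by
  simpa using SimpleGraph.edist_le (Walk.cons h1 (Walk.cons h2 (Walk.cons h3 Walk.nil)))

lemma edist_le_four_of' {V : Type*} {G : SimpleGraph V} {u w x y v : V}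
    (h1 : G.Adj u w) (h2 : G.Adj w x) (h3 : G.Adj x y) (h4 : G.Adj y v) :
    G.edist u v ≤ 4 := by
  simpa using
    SimpleGraph.edist_le (Walk.cons h1 (Walk.cons h2 (Walk.cons h3 (Walk.cons h4 Walk.nil))))

lemma key_lt {V : Type*} {G : SimpleGraph V} {k : ℕ} {c : V → ℕ}
    (hc : IsPackingColoring G k c) {x y : V} (d : ℕ) (hxy : x ≠ y) (hcol : c x = c y)
    (hd : G.edist x y ≤ (d : ℕ∞)) : c x < d := by
  have h := hc.2 x y hxy hcol
  exact_mod_cast lt_of_lt_of_le h hd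

section Aux

variable {n m : ℕ}

abbrev SGr (n : ℕ) : SimpleGraph (Fin n ⊕ (Fin n × Fin 1)) :=
  splittingGraph (⊤ : SimpleGraph (Fin n))
abbrev Gr (n m : ℕ) := FSSD (SGr n) m
abbrev Vtx (n m : ℕ) := (Fin n ⊕ (Fin n × Fin 1)) ⊕ ((SGr n).edgeSet × Fin m)

def vA (i : Fin n) : Vtx n m := Sum.inl (Sum.inl i)
def vP (i : Fin n) : Vtx n m := Sum.inl (Sum.inr (i, 0))
def vS (e : (SGr n).edgeSet) (t : Fin m) : Vtx n m := Sum.inr (e, t)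

def eAA {i j : Fin n} (h : i ≠ j) : (SGr n).edgeSet :=
  ⟨s(Sum.inl i, Sum.inl j), (SGr n).mem_edgeSet.mpr h⟩
def eAP {i j : Fin n} (h : i ≠ j) : (SGr n).edgeSet :=
  ⟨s(Sum.inl i, Sum.inr (j, 0)), (SGr n).mem_edgeSet.mpr h⟩

lemma adj_AA_left {i j : Fin n} (h : i ≠ j) (t : Fin m) :
    (Gr n m).Adj (vA i) (vS (eAA h) t) := Sym2.mem_mk_left _ _
lemma adj_AA_right {i j : Fin n} (h : i ≠ j) (t : Fin m) :
    (Gr n m).Adj (vA j) (vS (eAA h) t) := Sym2.mem_mk_right _ _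
lemma adj_AP_left {i j : Fin n} (h : i ≠ j) (t : Fin m) :
    (Gr n m).Adj (vA i) (vS (eAP h) t) := Sym2.mem_mk_left _ _
lemma adj_AP_right {i j : Fin n} (h : i ≠ j) (t : Fin m) :
    (Gr n m).Adj (vP j) (vS (eAP h) t) := Sym2.mem_mk_right _ _

lemma dAA (hm : 0 < m) {i j : Fin n} (h : i ≠ j) : (Gr n m).edist (vA i) (vA j) ≤ 2 :=
  edist_le_two_of' (adj_AA_left h ⟨0, hm⟩) (adj_AA_right h ⟨0, hm⟩).symm

lemma dAP (hm : 0 < m) {i j : Fin n} (h : i ≠ j) : (Gr n m).edist (vA i) (vP j) ≤ 2 :=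
  edist_le_two_of' (adj_AP_left h ⟨0, hm⟩) (adj_AP_right h ⟨0, hm⟩).symm

lemma exists_two_ne (hn : 3 ≤ n) (a : Fin n) : ∃ b d : Fin n, b ≠ a ∧ d ≠ a ∧ b ≠ d := by
  refine ⟨if a.val = 0 then ⟨1, by omega⟩ else ⟨0, by omega⟩,
    if a.val = 2 then ⟨1, by omega⟩ else ⟨2, by omega⟩, ?_, ?_, ?_⟩ <;>
    split_ifs <;> simp only [ne_eq, Fin.ext_iff] <;> omega

lemma dAPself (hn : 3 ≤ n) (hm : 0 < m) (p : Fin n) :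
    (Gr n m).edist (vA p) (vP p) ≤ 4 := by
  obtain ⟨j, -, hj, -⟩ := exists_two_ne hn p
  exact edist_le_four_of' (adj_AA_left (Ne.symm hj) ⟨0, hm⟩)
    (adj_AA_right (Ne.symm hj) ⟨0, hm⟩).symm
    (adj_AP_left hj ⟨0, hm⟩) (adj_AP_right hj ⟨0, hm⟩).symm

/-- Targets for the pigeonhole argument around a vertex `a`. -/
def tgt (a b d : Fin n) : Option (Fin n) → Fin n ⊕ (Fin n × Fin 1)
  | some j => if j = a then Sum.inr (b, 0) else Sum.inl j
  | none => Sum.inr (d, 0)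

lemma tgt_adj {a b d : Fin n} (hb : b ≠ a) (hd : d ≠ a) (o : Option (Fin n)) :
    (SGr n).Adj (Sum.inl a) (tgt a b d o) := by
  match o with
  | some j =>
    dsimp only [tgt]
    split_ifs with h
    · exact Ne.symm hb
    · exact Ne.symm h
  | none => exact Ne.symm hd

lemma tgt_inj {a b d : Fin n} (hbd : b ≠ d) :
    ∀ o o', tgt a b d o = tgt a b d o' → o = o' := by
  rintro (_ | j) (_ | j') h <;> simp only [tgt] at h <;>
    [skip; split_ifs at h; split_ifs at h; split_ifs at h] <;> simp_all

def vmap (hm : 0 < m) {a b d : Fin n} (hb : b ≠ a) (hd : d ≠ a) (o : Option (Fin n)) :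
    Vtx n m :=
  Sum.inr (⟨s(Sum.inl a, tgt a b d o), (SGr n).mem_edgeSet.mpr (tgt_adj hb hd o)⟩, ⟨0, hm⟩)

lemma vmap_adj (hm : 0 < m) {a b d : Fin n} (hb : b ≠ a) (hd : d ≠ a) (o : Option (Fin n)) :
    (Gr n m).Adj (vA a) (vmap hm hb hd o) := Sym2.mem_mk_left _ _

lemma vmap_inj (hm : 0 < m) {a b d : Fin n} (hb : b ≠ a) (hd : d ≠ a) (hbd : b ≠ d)
    {o o' : Option (Fin n)} (h : vmap hm hb hd o = vmap hm hb hd o') : o = o' := by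
  apply tgt_inj hbd
  simp only [vmap, Sum.inr.injEq, Prod.mk.injEq, Subtype.mk.injEq] at h
  exact Sym2.congr_right.mp h.1

end Aux

/-! ### Upper bound: an `(n+2)`-packing coloring -/

def ubc {n m : ℕ} : Vtx n m → ℕ
  | Sum.inl (Sum.inl i) => i.val + 3
  | Sum.inl (Sum.inr _) => 2
  | Sum.inr _ => 1

lemma ubc_packing {n m : ℕ} : IsPackingColoring (Gr n m) (n + 2) (ubc) := by
  constructor
  · rintro ((i | p) | e)
    · refine ⟨by simp [ubc], ?_⟩
      simp only [ubc]
      have := i.isLt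
      omega
    · exact ⟨by simp [ubc], by simp only [ubc]; omega⟩
    · exact ⟨by simp [ubc], by simp only [ubc]; omega⟩
  · rintro ((i | p) | e) ((j | q) | f) hne hcol <;> simp only [ubc] at hcol ⊢
    · -- two K_n-vertices: distinct colors
      exfalso
      have : i = j := Fin.ext (by omega)
      subst this
      exact hne rfl
    · exact absurd hcol (by omega)
    · exact absurd hcol (by omega)
    · exact absurd hcol (by omega)
    · -- two split vertices, color 2
      have h2 : (2 : ℕ∞) < (Gr n m).edist (Sum.inl (Sum.inr p)) (Sum.inl (Sum.inr q)) := by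
        apply two_lt_edist' hne (fun h => h)
        rintro ((x | y) | ⟨e, t⟩) ⟨h1, h2⟩
        · exact h2
        · exact h2
        · -- common neighbour would be a subdivision vertex of edge {p', q'}
          have hpq : (Sum.inr p : Fin n ⊕ (Fin n × Fin 1)) ≠ Sum.inr q := by
            intro h
            rw [Sum.inr.injEq] at h
            exact hne (by rw [h])
          have he : (e.1 : Sym2 _) = s(Sum.inr p, Sum.inr q) :=
            (Sym2.mem_and_mem_iff hpq).mp ⟨h1, h2⟩
          have hmem := e.2
          rw [he, SimpleGraph.mem_edgeSet] at hmem
          exact hmem.2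
      exact_mod_cast h2
    · exact absurd hcol (by omega)
    · exact absurd hcol (by omega)
    · exact absurd hcol (by omega)
    · -- two subdivision vertices, color 1
      have h1 : (1 : ℕ∞) < (Gr n m).edist (Sum.inr e) (Sum.inr f) :=
        one_lt_edist' hne (fun h => h)
      exact_mod_cast h1

/-! ### Lower bound: no `(n+1)`-packing coloring -/

lemma no_pack {n m : ℕ} (hn : 3 ≤ n) (hm : 0 < m) (c : Vtx n m → ℕ)
    (hc : IsPackingColoring (Gr n m) (n + 1) c) : False := by
  have hge1 : ∀ v, 1 ≤ c v := fun v => (hc.1 v).1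
  have hlek : ∀ v, c v ≤ n + 1 := fun v => (hc.1 v).2
  have hadj_ne : ∀ x y : Vtx n m, (Gr n m).Adj x y → c x = c y → False := by
    intro x y hxy hcc
    have h1 := hc.2 x y hxy.ne hcc
    rw [SimpleGraph.edist_eq_one_iff_adj.mpr hxy] at h1
    have h2 : ((1 : ℕ) : ℕ∞) ≤ (c x : ℕ∞) := by exact_mod_cast hge1 x
    exact absurd h1 (not_lt.mpr h2)
  by_cases hA1 : ∃ a, c (vA (n := n) (m := m) a) = 1
  · -- Case A : some K_n-vertex has color 1
    obtain ⟨a, ha⟩ := hA1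
    obtain ⟨b, d, hb, hd, hbd⟩ := exists_two_ne hn a
    have h2le : ∀ o : Option (Fin n), 2 ≤ c (vmap hm hb hd o) := by
      intro o
      have h1 := hge1 (vmap hm hb hd o)
      rcases Nat.lt_or_ge (c (vmap hm hb hd o)) 2 with h | h
      · exact absurd (by omega : c (vA (n := n) (m := m) a) = c (vmap hm hb hd o))
          (fun hcc => hadj_ne _ _ (vmap_adj hm hb hd o) hcc)
      · exact h
    obtain ⟨o, o', hoo, hff⟩ := Fintype.exists_ne_map_eq_of_card_lt
      (fun o : Option (Fin n) => (⟨c (vmap hm hb hd o) - 2, by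
        have := hlek (vmap hm hb hd o); have := h2le o; omega⟩ : Fin n))
      (by simp)
    have hcc : c (vmap hm hb hd o) = c (vmap hm hb hd o') := by
      have hval := congrArg Fin.val hff
      simp only at hval
      have := h2le o; have := h2le o'
      omega
    have hvne : vmap hm hb hd o ≠ vmap hm hb hd o' := fun h => hoo (vmap_inj hm hb hd hbd h)
    have hd2 : (Gr n m).edist (vmap hm hb hd o) (vmap hm hb hd o') ≤ 2 :=
      edist_le_two_of' (vmap_adj hm hb hd o).symm (vmap_adj hm hb hd o')
    have := key_lt hc 2 hvne hcc hd2
    have := h2le o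
    omega
  · -- Case B : no K_n-vertex has color 1
    push_neg at hA1
    have hA2 : ∀ a, 2 ≤ c (vA (n := n) (m := m) a) := fun a => by
      have := hge1 (vA (n := n) (m := m) a); have := hA1 a; omega
    have hvAinj : ∀ i j : Fin n, i ≠ j → (vA (n := n) (m := m) i) ≠ vA j := by
      intro i j hij h
      simp only [vA, Sum.inl.injEq] at h
      exact hij h
    have hAinj : ∀ i j : Fin n, i ≠ j → c (vA (n := n) (m := m) i) ≠ c (vA j) := by
      intro i j hij hcc
      have := key_lt hc 2 (hvAinj i j hij) hcc (dAA hm hij)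
      have := hA2 i
      omega
    have hsurj : ∀ t, 2 ≤ t → t ≤ n + 1 → ∃ l, c (vA (n := n) (m := m) l) = t := by
      have hg : Function.Injective (fun i : Fin n =>
          (⟨c (vA (n := n) (m := m) i) - 2, by
            have := hlek (vA (n := n) (m := m) i); have := hA2 i; omega⟩ : Fin n)) := by
        intro i j h
        by_contra hij
        have hval := congrArg Fin.val h
        simp only at hval
        have := hA2 i; have := hA2 j
        exact hAinj i j hij (by omega)
      have hgs := Finite.injective_iff_surjective.mp hg
      intro t ht1 ht2
      obtain ⟨l, hl⟩ := hgs ⟨t - 2, by omega⟩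
      have hval := congrArg Fin.val hl
      simp only at hval
      have := hA2 l
      exact ⟨l, by omega⟩
    -- some split vertex has color 1
    have hP1 : ∃ p, c (vP (n := n) (m := m) p) = 1 := by
      by_contra hno
      push_neg at hno
      have hPc : ∀ p : Fin n, c (vP (n := n) (m := m) p) = c (vA (n := n) (m := m) p) ∧
          c (vA (n := n) (m := m) p) ≤ 3 := by
        intro p
        have h2 : 2 ≤ c (vP (n := n) (m := m) p) := by
          have := hge1 (vP (n := n) (m := m) p); have := hno p; omega
        obtain ⟨l, hl⟩ := hsurj _ h2 (hlek _)
        have hvne : vP (n := n) (m := m) p ≠ vA l := by simp [vP, vA]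
        rcases eq_or_ne l p with rfl | hlp
        · have h4 := key_lt hc 4 hvne hl.symm
            (by rw [SimpleGraph.edist_comm]; exact dAPself hn hm l)
          exact ⟨hl.symm, by omega⟩
        · exfalso
          have h2' := key_lt hc 2 hvne hl.symm
            (by rw [SimpleGraph.edist_comm]; exact dAP hm hlp)
          omega
      have d01 := hAinj ⟨0, by omega⟩ ⟨1, by omega⟩ (by simp [Fin.ext_iff])
      have d02 := hAinj ⟨0, by omega⟩ ⟨2, by omega⟩ (by simp [Fin.ext_iff])
      have d12 := hAinj ⟨1, by omega⟩ ⟨2, by omega⟩ (by simp [Fin.ext_iff])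
      have := hA2 ⟨0, by omega⟩; have := hA2 ⟨1, by omega⟩; have := hA2 ⟨2, by omega⟩
      have := (hPc ⟨0, by omega⟩).2; have := (hPc ⟨1, by omega⟩).2
      have := (hPc ⟨2, by omega⟩).2
      omega
    obtain ⟨p, hp⟩ := hP1
    obtain ⟨j, k, hj, hk, hjk⟩ := exists_two_ne hn p
    have hs : ∀ (j' : Fin n) (hj' : j' ≠ p), c (vS (eAP hj') (⟨0, hm⟩ : Fin m)) = 2 := by
      intro j' hj'
      have h2 : 2 ≤ c (vS (eAP hj') (⟨0, hm⟩ : Fin m)) := by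
        have h1 := hge1 (vS (eAP hj') (⟨0, hm⟩ : Fin m))
        rcases Nat.lt_or_ge (c (vS (eAP hj') (⟨0, hm⟩ : Fin m))) 2 with h | h
        · exact absurd (by omega : c (vP (n := n) (m := m) p) = c (vS (eAP hj') ⟨0, hm⟩))
            (fun hcc => hadj_ne _ _ (adj_AP_right hj' ⟨0, hm⟩) hcc)
        · exact h
      obtain ⟨l, hl⟩ := hsurj _ h2 (hlek _)
      have hvne : vS (eAP hj') (⟨0, hm⟩ : Fin m) ≠ vA l := by simp [vS, vA]
      rcases eq_or_ne l j' with rfl | hlj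
      · exact absurd hl (fun hcc => hadj_ne _ _ (adj_AP_left hj' ⟨0, hm⟩) hcc)
      · have hdist : (Gr n m).edist (vS (eAP hj') (⟨0, hm⟩ : Fin m)) (vA l) ≤ 3 :=
          edist_le_three_of' (adj_AP_left hj' ⟨0, hm⟩).symm
            (adj_AA_left (Ne.symm hlj) ⟨0, hm⟩) (adj_AA_right (Ne.symm hlj) ⟨0, hm⟩).symm
        have h3 := key_lt hc 3 hvne hl.symm hdist
        omega
    have e1 := hs j hj
    have e2 := hs k hk
    have hne12 : vS (n := n) (m := m) (eAP hj) (⟨0, hm⟩ : Fin m) ≠ vS (eAP hk) ⟨0, hm⟩ := by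
      intro h
      simp only [vS, eAP, Sum.inr.injEq, Prod.mk.injEq, Subtype.mk.injEq] at h
      have h2 := Sym2.congr_left.mp h.1
      simp only [Sum.inl.injEq] at h2
      exact hjk h2
    have hdist12 : (Gr n m).edist (vS (eAP hj) (⟨0, hm⟩ : Fin m)) (vS (eAP hk) ⟨0, hm⟩) ≤ 2 :=
      edist_le_two_of' (adj_AP_right hj ⟨0, hm⟩).symm (adj_AP_right hk ⟨0, hm⟩)
    have := key_lt hc 2 hne12 (by rw [e1, e2]) hdist12
    omega

/-- `χ_ρ(FSSD_m(S'(K_n))) = n + 2` for `n ≥ 3`, `m ≥ 1`. -/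
theorem stmt_16 (n m : ℕ) (hn : 3 ≤ n) (hm : 1 ≤ m) :
    packingChromaticNumber (FSSD (splittingGraph (⊤ : SimpleGraph (Fin n))) m) =
      n + 2 := by
  have hset : (n + 2) ∈ {k | ∃ c : Vtx n m → ℕ, IsPackingColoring (Gr n m) k c} :=
    ⟨ubc, ubc_packing⟩
  apply le_antisymm
  · exact Nat.sInf_le hset
  · apply le_csInf ⟨n + 2, hset⟩
    rintro k ⟨c, hck⟩
    by_contra hlt
    push_neg at hlt
    have hc' : IsPackingColoring (Gr n m) (n + 1) c :=
      ⟨fun v => ⟨(hck.1 v).1, by have := (hck.1 v).2; omega⟩, hck.2⟩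
    exact no_pack hn hm c hc'
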